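/- arXiv:2003.03361 — 2 statements merged into one kernel-verified Lean document; each statement's English description precedes it below -/
import Mathlib

section
/- No maximal almost disjoint set is computable: if F ⊆ ℕ is a computable set such that each column F_n = {x : ⟨x,n⟩ ∈ F} is infinite and F_n ∩ F_k is finite for all n ≠ k, then there exists an infinite computable set R ⊆ ℕ such that R ∩ F_n is finite for every n. -/
/-!
Pick `x₀ < x₁ < ⋯` with `x_s` in the column `F_s` but in none of the columns `F_i`, `i < s`;
such `x_s` exist because `F_s` is infinite while `F_s ∩ ⋃_{i<s} F_i` is finite, and the least
one is found by unbounded search, deciding membership in `F` along the way. Then `R = {x_s}`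
meets `F_n` only in `x₀, …, x_n`, and is decidable because the sequence is increasing.
-/

/-- The `n`-th column of a set of naturals. -/
def column (F : Set ℕ) (n : ℕ) : Set ℕ := {x | Nat.pair x n ∈ F}

namespace ComputablePred

variable {α β : Type*} [Primcodable α] [Primcodable β]

theorem comp {p : β → Prop} {f : α → β} (hp : ComputablePred p) (hf : Computable f) :
    ComputablePred fun a => p (f a) := by
  obtain ⟨_, hp⟩ := hp
  exact ⟨inferInstance, hp.comp hf⟩

protected theorem and {p q : α → Prop} (hp : ComputablePred p) (hq : ComputablePred q) :
    ComputablePred fun a => p a ∧ q a := by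
  obtain ⟨_, hp⟩ := hp
  obtain ⟨_, hq⟩ := hq
  exact ⟨inferInstance, (Primrec.and.to_comp.comp hp hq).of_eq fun a => by simp⟩

open Classical in
-- `∀ i < n, p a i` holds iff the least `i` with `¬ (i < n ∧ p a i)` is at least `n`.
theorem forall_lt {p : α → ℕ → Prop} (hp : ComputablePred fun q : α × ℕ => p q.1 q.2) :
    ComputablePred fun q : α × ℕ => ∀ i < q.2, p q.1 i := by
  have hex (q : α × ℕ) : ∃ i, ¬(i < q.2 ∧ p q.1 i) := ⟨q.2, fun h => h.1.false⟩
  have hfind : Computable fun q : α × ℕ => Nat.find (hex q) :=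
    Computable.find (P := fun (q : α × ℕ) (i : ℕ) => ¬(i < q.2 ∧ p q.1 i))
      ((Primrec.nat_lt.computablePred.comp (Computable.snd.pair
        (Computable.snd.comp Computable.fst))).and
        (hp.comp ((Computable.fst.comp Computable.fst).pair Computable.snd))).not hex
  refine (Primrec.nat_le.computablePred.comp (Computable.snd.pair hfind)).of_eq fun q => ?_
  simp only [Nat.le_find_iff, not_not]
  exact forall₂_congr fun i hi => and_iff_right hi

theorem mem_range_of_strictMono {f : ℕ → ℕ} (hf : Computable f)
    (hmono : StrictMono f) : ComputablePred (· ∈ Set.range f) := by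
  have hex (x : ℕ) : ∃ s, x ≤ f s := ⟨x, hmono.le_apply⟩
  have hfind : Computable fun x => Nat.find (hex x) :=
    Computable.find (P := fun x s => x ≤ f s)
      (Primrec.nat_le.computablePred.comp (Computable.fst.pair (hf.comp Computable.snd))) hex
  refine (Primrec.eq.computablePred.comp ((hf.comp hfind).pair Computable.id)).of_eq fun x => ?_
  -- the least `s` with `x ≤ f s` is the only candidate for `f s = x`
  refine ⟨fun h => ⟨_, h⟩, fun ⟨s, hs⟩ => le_antisymm ?_ (Nat.find_spec (hex x))⟩
  exact (hmono.monotone (Nat.find_min' (hex x) hs.ge)).trans_eq hs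

end ComputablePred

open Classical in
theorem exists_computable_strictMono_of_infinite {P : ℕ → ℕ → Prop}
    (hP : ComputablePred fun q : ℕ × ℕ => P q.1 q.2) (hinf : ∀ s, {x | P s x}.Infinite) :
    ∃ f : ℕ → ℕ, Computable f ∧ StrictMono f ∧ ∀ s, P s (f s) := by
  have hex (q : ℕ × ℕ) : ∃ x, q.2 < x ∧ P q.1 x :=
    let ⟨x, hx, hlt⟩ := (hinf q.1).exists_gt q.2; ⟨x, hlt, hx⟩
  let next : ℕ × ℕ → ℕ := fun q => Nat.find (hex q)
  have hnext_comp : Computable next :=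
    Computable.find (P := fun (q : ℕ × ℕ) x => q.2 < x ∧ P q.1 x)
      ((Primrec.nat_lt.computablePred.comp ((Computable.snd.comp Computable.fst).pair
        Computable.snd)).and
        (hP.comp ((Computable.fst.comp Computable.fst).pair Computable.snd))) hex
  let f : ℕ → ℕ := fun n => Nat.rec (next (0, 0)) (fun s y => next (s + 1, y)) n
  have hspec (q : ℕ × ℕ) : q.2 < next q ∧ P q.1 (next q) := Nat.find_spec (hex q)
  refine ⟨f, ?_, strictMono_nat_of_lt_succ fun s => (hspec (s + 1, f s)).1, ?_⟩
  · exact Computable.nat_rec Computable.id (Computable.const _)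
      (hnext_comp.comp ((Computable.succ.comp (Computable.fst.comp Computable.snd)).pair
        (Computable.snd.comp Computable.snd))).to₂
  · rintro (_ | s)
    exacts [(hspec (0, 0)).2, (hspec (s + 1, f s)).2]

theorem Set.Infinite.diff_biUnion_lt {α : Type*} {A : ℕ → Set α} {s : ℕ} (hs : (A s).Infinite)
    (hfin : ∀ i < s, (A s ∩ A i).Finite) : (A s \ ⋃ i < s, A i).Infinite := by
  rw [← Set.sdiff_self_inter, Set.inter_iUnion₂]
  exact hs.sdiff ((Set.finite_lt_nat s).biUnion hfin)

/-- No maximal almost disjoint set is computable: if `F` is computable and describes an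
almost disjoint family, then some infinite computable set meets every column finitely. -/
theorem no_MAD_set_is_computable (F : Set ℕ)
    (hF : ComputablePred (· ∈ F))
    (hinf : ∀ n, (column F n).Infinite)
    (had : ∀ n k, n ≠ k → (column F n ∩ column F k).Finite) :
    ∃ R : Set ℕ, ComputablePred (· ∈ R) ∧ R.Infinite ∧
      ∀ n, (R ∩ column F n).Finite := by
  let P (s x : ℕ) : Prop := x ∈ column F s ∧ ∀ i < s, x ∉ column F i
  have hmem : ComputablePred fun q : ℕ × ℕ => q.1 ∈ column F q.2 :=
    hF.comp Primrec₂.natPair.to_comp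
  have hP : ComputablePred fun q : ℕ × ℕ => P q.1 q.2 :=
    (hmem.and (ComputablePred.forall_lt (p := fun x i => x ∉ column F i) hmem.not)).comp
      (Computable.snd.pair Computable.fst)
  have hPinf (s : ℕ) : {x | P s x}.Infinite := by
    convert (hinf s).diff_biUnion_lt fun i hi => had s i hi.ne' using 1
    ext x
    simp [P]
  obtain ⟨f, hf, hmono, hfP⟩ := exists_computable_strictMono_of_infinite hP hPinf
  refine ⟨Set.range f, ComputablePred.mem_range_of_strictMono hf hmono,
    Set.infinite_range_of_injective hmono.injective, fun n => ?_⟩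
  refine ((Set.finite_Iic n).image f).subset ?_
  rintro _ ⟨⟨s, rfl⟩, hs⟩
  exact ⟨s, not_lt.1 fun hns => (hfP s).2 n hns hs, rfl⟩
end

section
/- If F ⊆ ℕ describes a maximal almost disjoint family at the computable sets, then the set G defined by x ∈ G_n ⟺ ∀ i < n, x ∉ F_i describes a tower that is maximal in the computable sets: G_{n+1} ⊆ G_n, G_n \ G_{n+1} is infinite for all n, and for every infinite computable set R there is n with R \ G_n infinite. -/
/-- If `F` describes a maximal almost disjoint family at the computable sets, then
`G_n = {x | ∀ i < n, x ∉ F_i}` describes a tower maximal in the computable sets. -/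
theorem MAD_to_tower (F : Set ℕ)
    (hinf : ∀ n, (column F n).Infinite)
    (had : ∀ n k, n ≠ k → (column F n ∩ column F k).Finite)
    (hmax : ∀ R : Set ℕ, ComputablePred (· ∈ R) → R.Infinite →
      ∃ n, (R ∩ column F n).Infinite)
    (G : ℕ → Set ℕ)
    (hG : ∀ n, G n = {x | ∀ i < n, x ∉ column F i}) :
    (∀ n, G (n + 1) ⊆ G n) ∧
    (∀ n, (G n \ G (n + 1)).Infinite) ∧
    (∀ R : Set ℕ, ComputablePred (· ∈ R) → R.Infinite →
      ∃ n, (R \ G n).Infinite) := by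
  refine ⟨?_, ?_, ?_⟩
  · intro n x hx
    rw [hG] at hx ⊢
    intro i hi
    exact hx i (hi.trans (Nat.lt_succ_self n))
  · intro n
    have hfin : (column F n ∩ ⋃ i ∈ Finset.range n, column F i).Finite := by
      rw [Set.inter_iUnion₂]
      exact Set.Finite.biUnion (Finset.finite_toSet _) fun i hi =>
        had n i (by simp at hi; omega)
    have hsub : column F n \ (column F n ∩ ⋃ i ∈ Finset.range n, column F i) ⊆
        G n \ G (n + 1) := by
      rintro x ⟨hxn, hx2⟩
      rw [Set.mem_diff, hG, hG]
      constructor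
      · intro i hi hxi
        exact hx2 ⟨hxn, Set.mem_biUnion (Finset.mem_range.mpr hi) hxi⟩
      · intro h
        exact h n (Nat.lt_succ_self n) hxn
    exact Set.Infinite.mono hsub ((hinf n).diff hfin)
  · intro R hR hRinf
    obtain ⟨n, hn⟩ := hmax R hR hRinf
    refine ⟨n + 1, hn.mono ?_⟩
    rintro x ⟨hxR, hxn⟩
    refine ⟨hxR, ?_⟩
    rw [hG]
    intro h
    exact h n (Nat.lt_succ_self n) hxn
end
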